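/- arXiv:1406.5953 — 2 statements merged into one kernel-verified Lean document; each statement's English description precedes it below -/
import Mathlib

section
/- Let F be a number field of degree d with ring of integers O_F and discriminant D_F, and let x = (x_σ) ∈ F_ℝ satisfy x_σ ≠ 0 for every embedding σ : F → ℂ. Then there exists a nonzero a ∈ O_F such that sup_{σ∈Σ} |σ(a)·x_σ| ≤ √d · |D_F|^{1/d} · N(x)^{1/d}. -/
/-!
Minkowski's convex body theorem, applied to the box `|y_w| < C / |x_w|` in the mixed space,
gives a nonzero `a ∈ 𝓞 F` with `|σ(a) x_σ| < C` as soon as the volume `2^r₁ π^r₂ C^d / N(x)` of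
the box exceeds `2^d` times the covolume `2^(-r₂) √|D_F|` of `𝓞 F`, which holds when
`√|D_F| N(x) < C^d`. For `C = √d |D_F|^(1/d) N(x)^(1/d)` this is `√|D_F| < √d^d |D_F|`, true
for `d ≥ 2` since then `√d^d ≥ d ≥ 2`; for `d = 1` the element `a = 1` already works.
-/

open NumberField NumberField.InfinitePlace NumberField.mixedEmbedding MeasureTheory Finset
open scoped NNReal ENNReal

namespace NumberField

variable {K : Type*} [Field K]

theorem InfinitePlace.norm_apply_embedding_mk {x : (K →+* ℂ) → ℂ}
    (hx : ∀ σ, x ((starRingEnd ℂ).comp σ) = starRingEnd ℂ (x σ)) (σ : K →+* ℂ) :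
    ‖x (mk σ).embedding‖ = ‖x σ‖ := by
  rcases mk_eq_iff.mp (mk_embedding (mk σ)) with h | h
  · rw [h]
  · have h' : (starRingEnd ℂ).comp (mk σ).embedding = σ :=
      (RingHom.ext fun a ↦ (ComplexEmbedding.conjugate_coe_eq _ a).symm).trans h
    rw [← Complex.norm_conj, ← hx, h']

theorem InfinitePlace.prod_norm_embedding_pow_mult [NumberField K] {x : (K →+* ℂ) → ℂ}
    (hx : ∀ σ, x ((starRingEnd ℂ).comp σ) = starRingEnd ℂ (x σ)) :
    ∏ w : InfinitePlace K, ‖x w.embedding‖ ^ mult w = ∏ σ, ‖x σ‖ := by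
  classical
  rw [← prod_fiberwise univ mk]
  refine prod_congr rfl fun w _ ↦ ?_
  rw [← card_filter_mk_eq, ← prod_const]
  refine prod_congr rfl fun σ hσ ↦ ?_
  rw [← (mem_filter.mp hσ).2, norm_apply_embedding_mk hx]

open scoped Classical in
theorem mixedEmbedding.minkowskiBound_one_lt_volume_convexBodyLT [NumberField K]
    {f : InfinitePlace K → ℝ≥0} (h : √|(discr K : ℝ)| < ∏ w, (f w : ℝ) ^ mult w) :
    minkowskiBound K 1 < volume (convexBodyLT K f) := by
  rw [minkowskiBound, volume_fundamentalDomain_fractionalIdealLatticeBasis,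
    Units.val_one, FractionalIdeal.absNorm_one, Rat.cast_one, ENNReal.ofReal_one, one_mul,
    mixedEmbedding.finrank, volume_fundamentalDomain_latticeBasis, convexBodyLT_volume,
    ← card_add_two_mul_card_eq_rank]
  calc _ = ((2 : ℝ≥0∞)⁻¹ ^ nrComplexPlaces K * 2 ^ nrComplexPlaces K) *
        (2 ^ nrRealPlaces K * 2 ^ nrComplexPlaces K * ↑(NNReal.sqrt ‖discr K‖₊)) := by ring
    _ = ↑((2 : ℝ≥0) ^ nrRealPlaces K * 2 ^ nrComplexPlaces K * NNReal.sqrt ‖discr K‖₊) := by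
      rw [← mul_pow, ENNReal.inv_mul_cancel two_ne_zero ENNReal.ofNat_ne_top, one_pow, one_mul]
      push_cast
      rfl
    _ < _ := by
      rw [← ENNReal.coe_mul, ENNReal.coe_lt_coe, ← NNReal.coe_lt_coe]
      push_cast
      rw [Int.norm_eq_abs, NNReal.coe_real_pi, mul_assoc, mul_assoc]
      gcongr ?_ * ?_
      calc _ ≤ Real.pi ^ nrComplexPlaces K * √|(discr K : ℝ)| := by
            gcongr; exact Real.two_le_pi
        _ < _ := by gcongr

theorem exists_ne_zero_norm_mul_lt [NumberField K] {x : (K →+* ℂ) → ℂ}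
    (hxF : ∀ σ, x ((starRingEnd ℂ).comp σ) = starRingEnd ℂ (x σ)) (hx : ∀ σ, x σ ≠ 0)
    {C : ℝ} (hC : 0 ≤ C) (h : √|(discr K : ℝ)| * ∏ σ, ‖x σ‖ < C ^ Module.finrank ℚ K) :
    ∃ a : 𝓞 K, a ≠ 0 ∧ ∀ σ : K →+* ℂ, ‖σ a * x σ‖ < C := by
  classical
  have hx_pos : ∀ σ, 0 < ‖x σ‖ := fun σ ↦ norm_pos_iff.mpr (hx σ)
  let f : InfinitePlace K → ℝ≥0 := fun w ↦
    ⟨C / ‖x w.embedding‖, div_nonneg hC (hx_pos w.embedding).le⟩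
  have hf : ∏ w, (f w : ℝ) ^ mult w = C ^ Module.finrank ℚ K / ∏ σ, ‖x σ‖ := by
    change ∏ w, (C / ‖x w.embedding‖) ^ mult w = _
    simp only [div_pow, prod_div_distrib, prod_pow_eq_pow_sum, sum_mult_eq,
      prod_norm_embedding_pow_mult hxF]
  obtain ⟨a, ha, hlt⟩ := exists_ne_zero_mem_ringOfIntegers_lt K (f := f) <|
    minkowskiBound_one_lt_volume_convexBodyLT <| by
      rwa [hf, lt_div_iff₀ (prod_pos fun σ _ ↦ hx_pos σ)]
  refine ⟨a, ha, fun σ ↦ ?_⟩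
  have hσ : ‖σ a‖ < C / ‖x (InfinitePlace.mk σ).embedding‖ := hlt (InfinitePlace.mk σ)
  rw [norm_apply_embedding_mk hxF, lt_div_iff₀ (hx_pos σ)] at hσ
  rwa [norm_mul]

end NumberField

theorem Real.sqrt_mul_lt_pow_sqrt_mul_rpow_mul_rpow {d : ℕ} (hd : 2 ≤ d) {D N : ℝ}
    (hD : 1 ≤ D) (hN : 0 < N) :
    √D * N < (√d * D ^ ((1 : ℝ) / d) * N ^ ((1 : ℝ) / d)) ^ d := by
  have hd0 : d ≠ 0 := by omega
  have hdR : (2 : ℝ) ≤ d := by exact_mod_cast hd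
  have hpow : 2 ≤ √d ^ d := calc
    (2 : ℝ) ≤ √d ^ 2 := by rwa [Real.sq_sqrt (by positivity)]
    _ ≤ √d ^ d := pow_le_pow_right₀ (Real.one_le_sqrt.mpr (by linarith)) hd
  calc √D * N ≤ D * N := by gcongr; exact Real.sqrt_le_self_iff.mpr (Or.inr hD)
    _ < √d ^ d * (D * N) := lt_mul_of_one_lt_left (by positivity) (by linarith)
    _ = _ := by
      rw [mul_pow, mul_pow, one_div, Real.rpow_inv_natCast_pow (by positivity) hd0,
        Real.rpow_inv_natCast_pow hN.le hd0, mul_assoc]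

/-- For every `x ∈ F_ℝ ⊆ ℂ^Σ` with all components nonzero, there exists a nonzero
algebraic integer `a ∈ O_F` with `sup_σ |σ(a) x_σ| ≤ √d ⬝ |D_F|^(1/d) ⬝ N(x)^(1/d)`. -/
theorem exists_integer_sup_bound (F : Type*) [Field F] [NumberField F]
    (d : ℕ) (hd : d = Module.finrank ℚ F)
    (x : (F →+* ℂ) → ℂ)
    (hxF : ∀ σ : F →+* ℂ, x ((starRingEnd ℂ).comp σ) = (starRingEnd ℂ) (x σ))
    (hx : ∀ σ : F →+* ℂ, x σ ≠ 0) :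
    ∃ a : 𝓞 F, a ≠ 0 ∧ ∀ σ : F →+* ℂ,
      ‖σ (a : F) * x σ‖ ≤
        Real.sqrt d * |(NumberField.discr F : ℝ)| ^ ((1 : ℝ) / d) *
          (∏ τ : F →+* ℂ, ‖x τ‖) ^ ((1 : ℝ) / d) := by
  have hD : (1 : ℝ) ≤ |(discr F : ℝ)| := by
    rw [← Int.cast_abs]
    exact_mod_cast Int.one_le_abs (discr_ne_zero F)
  have hN : 0 < ∏ τ : F →+* ℂ, ‖x τ‖ := prod_pos fun σ _ ↦ norm_pos_iff.mpr (hx σ)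
  have hd0 : 0 < d := hd ▸ Module.finrank_pos
  obtain hd1 | hd2 : d = 1 ∨ 2 ≤ d := by omega
  · refine ⟨1, one_ne_zero, fun σ ↦ ?_⟩
    have : Subsingleton (F →+* ℂ) := by
      rw [← Fintype.card_le_one_iff_subsingleton, Embeddings.card, ← hd, hd1]
    simp only [hd1, Nat.cast_one, Real.sqrt_one, div_one, Real.rpow_one, one_mul, map_one,
      Fintype.prod_subsingleton _ σ]
    exact le_mul_of_one_le_left (norm_nonneg _) hD
  · subst hd
    obtain ⟨a, ha, hlt⟩ := exists_ne_zero_norm_mul_lt hxF hx (by positivity) <|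
      Real.sqrt_mul_lt_pow_sqrt_mul_rpow_mul_rpow hd2 hD hN
    exact ⟨a, ha, fun σ ↦ (hlt σ).le⟩
end

section
/- Let F be a number field of degree d with ring of integers O_F and discriminant D_F, and let h be a well-rounded hermitian metric on L = O_F^N. Then for every nonzero z ∈ L one has Π_{σ∈Σ} h_σ(z) ≥ d^{−3d/2} · |D_F|^{−1}. -/
/-!
If `∏_σ h_σ(z)` were smaller than `(d^d |D_F|)⁻¹`, the region `|σ(α)|² < (d h_σ(z))⁻¹` of the
Minkowski space of `F` would exceed Minkowski's volume bound for `O_F`. Its radii are constant on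
infinite places because `H_σ̄ = conj H_σ`, so it contains the image of some nonzero `α ∈ O_F`. Then
`q_h(α z) = ∑_σ |σ(α)|² h_σ(z) < ∑_σ d⁻¹ = 1`, contradicting the minimum `1` of `q_h`. The stated
bound follows since `d^(-3d/2) ≤ d^(-d)`.
-/

open NumberField
open scoped ComplexOrder

/-- The real quadratic form `q_h(x) = ∑_σ h_σ(x)` attached to a family of hermitian
matrices `(H_σ)`, where `h_σ(x) = σ(x)* H_σ σ(x)`. -/
noncomputable def hermQ {F : Type*} [Field F] [NumberField F] {N : ℕ}
    (H : (F →+* ℂ) → Matrix (Fin N) (Fin N) ℂ) (x : Fin N → F) : ℝ :=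
  ∑ σ : F →+* ℂ,
    (dotProduct (star fun j => σ (x j)) ((H σ).mulVec fun j => σ (x j))).re

/-- A family `(H_σ)` defines a hermitian metric on `O_F^N` if each `H_σ` is positive
definite and `H_{σ̄}` is the entrywise conjugate of `H_σ`. -/
def IsHermMetric {F : Type*} [Field F] [NumberField F] {N : ℕ}
    (H : (F →+* ℂ) → Matrix (Fin N) (Fin N) ℂ) : Prop :=
  (∀ σ : F →+* ℂ, (H σ).PosDef) ∧
    ∀ σ : F →+* ℂ, H ((starRingEnd ℂ).comp σ) = (H σ).map (starRingEnd ℂ)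

/-- `(O_F^N, h)` is well rounded: the minimum of `q_h` over nonzero lattice points
is `1`, and the set `M(L,h)` of minimal vectors spans `F^N` over `F`. -/
def IsWellRounded {F : Type*} [Field F] [NumberField F] {N : ℕ}
    (H : (F →+* ℂ) → Matrix (Fin N) (Fin N) ℂ) : Prop :=
  IsLeast {r : ℝ | ∃ x : Fin N → 𝓞 F, x ≠ 0 ∧ r = hermQ H (fun j => (x j : F))} 1 ∧
    Submodule.span F {v : Fin N → F |
      ∃ x : Fin N → 𝓞 F, (∀ j, v j = (x j : F)) ∧ hermQ H v = 1} = ⊤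

namespace Matrix

variable {n R : Type*} [Fintype n] [CommSemiring R] [StarRing R]

theorem star_smul_dotProduct_mulVec_smul (M : Matrix n n R) (c : R) (v : n → R) :
    star (c • v) ⬝ᵥ M *ᵥ (c • v) = star c * c * (star v ⬝ᵥ M *ᵥ v) := by
  rw [star_smul, mulVec_smul, smul_dotProduct, dotProduct_smul, smul_eq_mul, smul_eq_mul,
    mul_assoc, mul_left_comm]

theorem star_star_dotProduct_map_star_mulVec_star (M : Matrix n n R) (v : n → R) :
    star (star v) ⬝ᵥ M.map star *ᵥ star v = star (star v ⬝ᵥ M *ᵥ v) := by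
  simp only [dotProduct, mulVec, Pi.star_apply, map_apply, star_sum, star_mul', star_star]

end Matrix

namespace NumberField

variable {F : Type*} [Field F] [NumberField F]

theorem InfinitePlace.prod_comp_mk_eq_prod_pow_mult {M : Type*} [CommMonoid M]
    (g : InfinitePlace F → M) : ∏ σ : F →+* ℂ, g (mk σ) = ∏ w, g w ^ mult w := by
  classical
  rw [← Finset.prod_fiberwise Finset.univ mk (fun σ => g (mk σ))]
  refine Finset.prod_congr rfl fun w _ => ?_
  rw [Finset.prod_congr rfl fun σ hσ => congrArg g (Finset.mem_filter.mp hσ).2,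
    Finset.prod_const, card_filter_mk_eq]

namespace mixedEmbedding

open InfinitePlace

theorem minkowskiBound_one_eq :
    minkowskiBound F ↑1 =
      ((2 ^ (nrRealPlaces F + nrComplexPlaces F) * NNReal.sqrt ‖discr F‖₊ : NNReal) : ENNReal) := by
  rw [minkowskiBound, volume_fundamentalDomain_fractionalIdealLatticeBasis, Units.val_one,
    FractionalIdeal.absNorm_one, Rat.cast_one, ENNReal.ofReal_one, one_mul,
    volume_fundamentalDomain_latticeBasis, mixedEmbedding.finrank, ← card_add_two_mul_card_eq_rank,
    show (2 : ENNReal)⁻¹ = ((2⁻¹ : NNReal) : ENNReal) by simp,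
    show (2 : ENNReal) = ((2 : NNReal) : ENNReal) by simp, ← ENNReal.coe_pow, ← ENNReal.coe_pow,
    ← ENNReal.coe_mul, ← ENNReal.coe_mul, ENNReal.coe_inj, pow_add, pow_add, pow_mul, sq, inv_pow]
  field_simp
  rw [← pow_mul, ← pow_mul, mul_comm 2, mul_comm]

theorem exists_ne_zero_mem_ringOfIntegers_lt_of_sqrt_discr_lt {f : InfinitePlace F → NNReal}
    (h : NNReal.sqrt ‖discr F‖₊ < ∏ w, f w ^ mult w) :
    ∃ a : 𝓞 F, a ≠ 0 ∧ ∀ w : InfinitePlace F, w a < f w := by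
  classical
  refine exists_ne_zero_mem_ringOfIntegers_lt F ?_
  rw [minkowskiBound_one_eq, convexBodyLT_volume]
  have hbound : 2 ^ (nrRealPlaces F + nrComplexPlaces F) * NNReal.sqrt ‖discr F‖₊ <
      convexBodyLTFactor F * ∏ w, f w ^ mult w :=
    calc 2 ^ (nrRealPlaces F + nrComplexPlaces F) * NNReal.sqrt ‖discr F‖₊
        = 2 ^ nrRealPlaces F * (2 ^ nrComplexPlaces F * NNReal.sqrt ‖discr F‖₊) := by ring
      _ < 2 ^ nrRealPlaces F * (2 ^ nrComplexPlaces F * ∏ w, f w ^ mult w) := by gcongr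
      _ ≤ 2 ^ nrRealPlaces F * (NNReal.pi ^ nrComplexPlaces F * ∏ w, f w ^ mult w) := by
        gcongr
        exact_mod_cast Real.two_le_pi
      _ = convexBodyLTFactor F * ∏ w, f w ^ mult w := by ring
  exact_mod_cast hbound

theorem exists_ne_zero_mem_ringOfIntegers_sq_norm_lt {t : InfinitePlace F → ℝ}
    (ht : ∀ w, 0 ≤ t w) (h : |(discr F : ℝ)| < ∏ σ : F →+* ℂ, t (InfinitePlace.mk σ)) :
    ∃ a : 𝓞 F, a ≠ 0 ∧ ∀ σ : F →+* ℂ, ‖σ a‖ ^ 2 < t (InfinitePlace.mk σ) := by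
  set f : InfinitePlace F → NNReal := fun w => (√(t w)).toNNReal
  have hf : ∀ w, (f w : ℝ) = √(t w) := fun w => Real.coe_toNNReal _ (Real.sqrt_nonneg _)
  obtain ⟨a, ha, hlt⟩ := exists_ne_zero_mem_ringOfIntegers_lt_of_sqrt_discr_lt (f := f) (by
    rw [← NNReal.coe_lt_coe]
    simp only [NNReal.coe_prod, NNReal.coe_pow, hf, Real.coe_sqrt, coe_nnnorm, Int.norm_eq_abs]
    rw [← prod_comp_mk_eq_prod_pow_mult (fun w => √(t w)), ← Real.sqrt_prod _ fun σ _ => ht _]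
    exact Real.sqrt_lt_sqrt (abs_nonneg _) (by simpa [Int.cast_abs] using h))
  refine ⟨a, ha, fun σ => (Real.lt_sqrt (norm_nonneg _)).mp ?_⟩
  rw [← hf, ← apply]
  exact hlt (InfinitePlace.mk σ)

end mixedEmbedding

end NumberField

section HermitianMetric

open InfinitePlace Matrix

variable {F : Type*} [Field F] {N : ℕ} (H : (F →+* ℂ) → Matrix (Fin N) (Fin N) ℂ)

noncomputable def hermAt (σ : F →+* ℂ) (x : Fin N → F) : ℝ :=
  (star (fun j => σ (x j)) ⬝ᵥ H σ *ᵥ fun j => σ (x j)).re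

theorem hermQ_eq_sum_hermAt [NumberField F] (x : Fin N → F) :
    hermQ H x = ∑ σ, hermAt H σ x := rfl

variable {H}

theorem hermAt_pos {σ : F →+* ℂ} (hσ : (H σ).PosDef) {x : Fin N → F} (hx : x ≠ 0) :
    0 < hermAt H σ x := by
  have hσx : (fun j => σ (x j)) ≠ 0 := fun h =>
    hx (funext fun j => σ.injective (by simpa using congrFun h j))
  exact (Complex.pos_iff.mp (hσ.dotProduct_mulVec_pos hσx)).1

theorem hermAt_smul (σ : F →+* ℂ) (c : F) (x : Fin N → F) :
    hermAt H σ (c • x) = ‖σ c‖ ^ 2 * hermAt H σ x := by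
  have hσ : (fun j => σ ((c • x) j)) = σ c • fun j => σ (x j) := by
    ext j
    simp
  rw [hermAt, hσ, star_smul_dotProduct_mulVec_smul, Complex.star_def,
    ← Complex.normSq_eq_conj_mul_self, Complex.normSq_eq_norm_sq, Complex.re_ofReal_mul, hermAt]

theorem hermAt_conjugate
    (hconj : ∀ σ : F →+* ℂ, H ((starRingEnd ℂ).comp σ) = (H σ).map (starRingEnd ℂ))
    (σ : F →+* ℂ) (x : Fin N → F) :
    hermAt H (ComplexEmbedding.conjugate σ) x = hermAt H σ x := by
  have hσ : ComplexEmbedding.conjugate σ = (starRingEnd ℂ).comp σ := rfl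
  rw [hermAt, hσ, hconj, hermAt]
  exact (congrArg Complex.re (star_star_dotProduct_map_star_mulVec_star (H σ) _)).trans
    (Complex.conj_re _)

theorem hermAt_embedding_mk [NumberField F]
    (hconj : ∀ σ : F →+* ℂ, H ((starRingEnd ℂ).comp σ) = (H σ).map (starRingEnd ℂ))
    (σ : F →+* ℂ) (x : Fin N → F) :
    hermAt H (mk σ).embedding x = hermAt H σ x := by
  rcases embedding_mk_eq σ with h | h <;> rw [h]
  exact hermAt_conjugate hconj σ x

open Module mixedEmbedding in
theorem exists_ne_zero_hermQ_smul_lt_one [NumberField F] (hpos : ∀ σ, (H σ).PosDef)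
    (hconj : ∀ σ : F →+* ℂ, H ((starRingEnd ℂ).comp σ) = (H σ).map (starRingEnd ℂ))
    {v : Fin N → F} (hv : v ≠ 0)
    (hsmall : ∏ σ, hermAt H σ v < ((finrank ℚ F : ℝ) ^ finrank ℚ F * |(discr F : ℝ)|)⁻¹) :
    ∃ α : 𝓞 F, α ≠ 0 ∧ hermQ H ((α : F) • v) < 1 := by
  set d := finrank ℚ F
  have hvpos : ∀ σ, 0 < hermAt H σ v := fun σ => hermAt_pos (hpos σ) hv
  set P := ∏ σ, hermAt H σ v
  have hP : 0 < P := Finset.prod_pos fun σ _ => hvpos σ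
  have hd : (0 : ℝ) < d := Nat.cast_pos.mpr finrank_pos
  have hcard : Fintype.card (F →+* ℂ) = d := Embeddings.card F ℂ
  have hD : 0 < |(discr F : ℝ)| := abs_pos.mpr (Int.cast_ne_zero.mpr (discr_ne_zero F))
  set t : InfinitePlace F → ℝ := fun w => (d * hermAt H w.embedding v)⁻¹
  have ht : ∀ σ, t (mk σ) * hermAt H σ v = (d : ℝ)⁻¹ := fun σ => by
    simp only [t, hermAt_embedding_mk hconj]
    field_simp [(hvpos σ).ne']
  have hprod : ∏ σ, t (mk σ) = ((d : ℝ) ^ d * P)⁻¹ := by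
    simp only [t, hermAt_embedding_mk hconj, Finset.prod_inv_distrib, Finset.prod_mul_distrib,
      Finset.prod_const, Finset.card_univ, hcard, P]
  have hdiscr : |(discr F : ℝ)| < ∏ σ, t (mk σ) := by
    rw [inv_eq_one_div, lt_div_iff₀ (by positivity)] at hsmall
    rw [hprod, inv_eq_one_div, lt_div_iff₀ (by positivity)]
    calc |(discr F : ℝ)| * ((d : ℝ) ^ d * P) = P * ((d : ℝ) ^ d * |(discr F : ℝ)|) := by ring
      _ < 1 := hsmall
  obtain ⟨α, hα, hαlt⟩ := exists_ne_zero_mem_ringOfIntegers_sq_norm_lt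
    (fun w => inv_nonneg.mpr (mul_nonneg hd.le (hvpos _).le)) hdiscr
  refine ⟨α, hα, ?_⟩
  calc hermQ H ((α : F) • v)
      = ∑ σ, ‖σ α‖ ^ 2 * hermAt H σ v := by simp only [hermQ_eq_sum_hermAt, hermAt_smul]
    _ < ∑ σ, t (mk σ) * hermAt H σ v :=
      Finset.sum_lt_sum_of_nonempty Finset.univ_nonempty fun σ _ =>
        mul_lt_mul_of_pos_right (hαlt σ) (hvpos σ)
    _ = 1 := by
      simp only [ht, Finset.sum_const, Finset.card_univ, hcard, nsmul_eq_mul]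
      field_simp

open Module in
theorem inv_finrank_pow_mul_abs_discr_le_prod_hermAt [NumberField F]
    (hpos : ∀ σ, (H σ).PosDef)
    (hconj : ∀ σ : F →+* ℂ, H ((starRingEnd ℂ).comp σ) = (H σ).map (starRingEnd ℂ))
    (hmin : ∀ x : Fin N → 𝓞 F, x ≠ 0 → 1 ≤ hermQ H fun j => (x j : F))
    {z : Fin N → 𝓞 F} (hz : z ≠ 0) :
    ((finrank ℚ F : ℝ) ^ finrank ℚ F * |(discr F : ℝ)|)⁻¹ ≤
      ∏ σ, hermAt H σ fun j => (z j : F) := by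
  have hv : (fun j => (z j : F)) ≠ 0 := fun h => hz (funext fun j => by simpa using congrFun h j)
  by_contra! hsmall
  obtain ⟨α, hα, hlt⟩ := exists_ne_zero_hermQ_smul_lt_one hpos hconj hv hsmall
  have hαz : (fun j => ((α • z) j : F)) = (α : F) • fun j => (z j : F) := by
    ext j
    simp
  have hone := hmin (α • z) (smul_ne_zero hα hz)
  rw [hαz] at hone
  exact hone.not_gt hlt

end HermitianMetric

/-- For a well-rounded hermitian metric `h` on `O_F^N`, every nonzero lattice vector
`z` satisfies `∏_σ h_σ(z) ≥ d^(-3d/2) |D_F|⁻¹`. -/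
theorem prod_hermQ_lower_bound
    (F : Type*) [Field F] [NumberField F]
    (d : ℕ) (hd : d = Module.finrank ℚ F)
    (N : ℕ)
    (H : (F →+* ℂ) → Matrix (Fin N) (Fin N) ℂ) (hH : IsHermMetric H)
    (hwr : IsWellRounded H)
    (z : Fin N → 𝓞 F) (hz : z ≠ 0) :
    (d : ℝ) ^ (-(3 * (d : ℝ) / 2)) * |(NumberField.discr F : ℝ)|⁻¹ ≤
      ∏ σ : F →+* ℂ,
        (dotProduct (star fun j => σ (z j : F)) ((H σ).mulVec fun j => σ (z j : F))).re := by
  have hbound := inv_finrank_pow_mul_abs_discr_le_prod_hermAt hH.1 hH.2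
    (fun x hx => hwr.1.2 ⟨x, hx, rfl⟩) hz
  rw [← hd] at hbound
  have hd1 : (1 : ℝ) ≤ d := by
    rw [hd]
    exact_mod_cast Module.finrank_pos
  calc (d : ℝ) ^ (-(3 * (d : ℝ) / 2)) * |(discr F : ℝ)|⁻¹
      ≤ (d : ℝ) ^ (-(d : ℝ)) * |(discr F : ℝ)|⁻¹ := by
        gcongr
        linarith
    _ = ((d : ℝ) ^ d * |(discr F : ℝ)|)⁻¹ := by
        rw [Real.rpow_neg (by positivity), Real.rpow_natCast, mul_inv]
    _ ≤ _ := hbound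
end
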